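/- (Third-order equivalence with forcing.) Under the hypotheses of the third-order equivalence on D2Q9, but with the modified momentum constraint Σᵢ e_{iα} fᵢ = -(Δt/2) F_α for α ∈ {x,y}, the Hermite projection wᵢ H⁽³⁾ᵢ,αβγ A_{αβγ}/(6c_s⁶) equals f⁻ᵢ + (Δt/2) (wᵢ e_{iα} F_α)/c_s² (summation over α). -/

import Mathlib

open Finset

/-- x-components of the D2Q9 velocities. -/
noncomputable def ex (c : ℝ) : Fin 9 → ℝ := ![0, c, 0, -c, 0, c, -c, -c, c]

/-- y-components of the D2Q9 velocities. -/
noncomputable def ey (c : ℝ) : Fin 9 → ℝ := ![0, 0, c, 0, -c, c, c, -c, -c]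

/-- D2Q9 velocity components indexed by coordinate `α ∈ {x, y}`. -/
noncomputable def ev (c : ℝ) : Fin 2 → Fin 9 → ℝ := ![ex c, ey c]

/-- D2Q9 weights. -/
noncomputable def w9 : Fin 9 → ℝ := ![4/9, 1/9, 1/9, 1/9, 1/9, 1/36, 1/36, 1/36, 1/36]

/-- Velocity inversion on D2Q9 indices: `e (bar9 i) = - e i`. -/
def bar9 : Fin 9 → Fin 9 := ![0, 3, 4, 1, 2, 7, 8, 5, 6]

/-- Squared sound speed. -/
noncomputable def cs2 (c : ℝ) : ℝ := c ^ 2 / 3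

/-- Second-order Hermite polynomials `H⁽²⁾ᵢ,αβ = e_{iα} e_{iβ} - c_s² δ_{αβ}`. -/
noncomputable def H2 (c : ℝ) (α β : Fin 2) (i : Fin 9) : ℝ :=
  ev c α i * ev c β i - cs2 c * (if α = β then 1 else 0)

/-- Third-order Hermite polynomials. -/
noncomputable def H3 (c : ℝ) (α β γ : Fin 2) (i : Fin 9) : ℝ :=
  ev c α i * ev c β i * ev c γ i -
    cs2 c * (ev c α i * (if β = γ then 1 else 0) + ev c β i * (if γ = α then 1 else 0) +
      ev c γ i * (if α = β then 1 else 0))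

/-- The D2Q9 ghost mode `φᵢ = (e_{ix}² - c_s²)(e_{iy}² - c_s²)`. -/
noncomputable def ghost (c : ℝ) (i : Fin 9) : ℝ :=
  (ex c i ^ 2 - cs2 c) * (ey c i ^ 2 - cs2 c)

/-- The symmetric subspace of `ℝ⁹` under velocity inversion. -/
def S9 : Submodule ℝ (Fin 9 → ℝ) where
  carrier := {f | ∀ i, f (bar9 i) = f i}
  add_mem' := by intro a b ha hb i; simp [ha i, hb i]
  zero_mem' := by intro i; simp
  smul_mem' := by intro r a ha i; simp [ha i]

/-- The antisymmetric subspace of `ℝ⁹` under velocity inversion. -/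
def A9 : Submodule ℝ (Fin 9 → ℝ) where
  carrier := {f | ∀ i, f (bar9 i) = -f i}
  add_mem' := by intro a b ha hb i; simp [ha i, hb i]; ring
  zero_mem' := by intro i; simp
  smul_mem' := by intro r a ha i; simp [ha i]

/-! On D2Q9 every velocity component lies in `{0, ±c}`, so `e³ = c² e` and the diagonal
Hermite polynomials `H⁽³⁾_xxx`, `H⁽³⁾_yyy` vanish on the lattice. The antisymmetric subspace
of `ℝ⁹` is then spanned by `e_x`, `e_y`, `H⁽³⁾_xxy`, `H⁽³⁾_xyy`, which are orthogonal for the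
inner product weighted by `1/wᵢ`; hence the antisymmetric part `f⁻` is the sum of the first-
and third-order Hermite projections of `f` (`antisymm_kernel` is this completeness relation).
The forcing constraint turns the first-order projection into `-(Δt/2) wᵢ e_{iα} F_α / c_s²`. -/

lemma ev_pow_three (c : ℝ) (α : Fin 2) (i : Fin 9) : ev c α i ^ 3 = c ^ 2 * ev c α i := by
  fin_cases α <;> fin_cases i <;> simp [ev, ex, ey] <;> ring

lemma H3_self (c : ℝ) (α : Fin 2) (i : Fin 9) : H3 c α α α i = 0 := by
  simp only [H3, cs2, if_true]
  linear_combination ev_pow_three c α i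

lemma sum_H3_mul_H3 (c : ℝ) (i j : Fin 9) :
    ∑ α : Fin 2, ∑ β : Fin 2, ∑ γ : Fin 2, H3 c α β γ i * H3 c α β γ j
      = 3 * (H3 c 0 0 1 i * H3 c 0 0 1 j + H3 c 0 1 1 i * H3 c 0 1 1 j) := by
  simp only [Fin.sum_univ_two, H3_self]
  simp only [H3, Fin.isValue, ↓reduceIte, zero_ne_one, one_ne_zero, mul_zero, mul_one, add_zero,
    zero_add]
  ring

lemma antisymm_kernel {c : ℝ} (hc : c ≠ 0) (i j : Fin 9) :
    w9 i * (∑ α : Fin 2, ev c α i * ev c α j / cs2 c +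
        (∑ α : Fin 2, ∑ β : Fin 2, ∑ γ : Fin 2, H3 c α β γ i * H3 c α β γ j) / (6 * cs2 c ^ 3))
      = ((if j = i then 1 else 0) - (if j = bar9 i then 1 else 0)) / 2 := by
  rw [sum_H3_mul_H3]
  fin_cases i <;> fin_cases j <;> simp [H3, ev, ex, ey, w9, bar9, cs2] <;> field_simp <;> ring

lemma antisymm_part_eq_first_add_third_projection {c : ℝ} (hc : c ≠ 0) (f : Fin 9 → ℝ)
    (i : Fin 9) :
    (f i - f (bar9 i)) / 2 =
      w9 i * (∑ α : Fin 2, ev c α i * (∑ j, ev c α j * f j)) / cs2 c +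
        w9 i * (∑ α : Fin 2, ∑ β : Fin 2, ∑ γ : Fin 2,
          H3 c α β γ i * (∑ j, H3 c α β γ j * f j)) / (6 * cs2 c ^ 3) := by
  calc (f i - f (bar9 i)) / 2
      = ∑ j, ((if j = i then 1 else 0) - (if j = bar9 i then 1 else 0)) / 2 * f j := by
        simp only [sub_div, sub_mul, Finset.sum_sub_distrib, ite_div, ite_mul, zero_div,
          zero_mul, Finset.sum_ite_eq', Finset.mem_univ, if_true]
        ring
    _ = ∑ j, w9 i * (∑ α : Fin 2, ev c α i * ev c α j / cs2 c +
          (∑ α : Fin 2, ∑ β : Fin 2, ∑ γ : Fin 2, H3 c α β γ i * H3 c α β γ j) /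
            (6 * cs2 c ^ 3)) * f j := Finset.sum_congr rfl fun j _ => by rw [antisymm_kernel hc]
    _ = _ := by
        simp only [Fin.sum_univ_two, Finset.mul_sum, Finset.sum_div, ← Finset.sum_add_distrib]
        exact Finset.sum_congr rfl fun j _ => by ring

theorem d2q9_third_order_equivalence_forcing_general (c : ℝ) (hc : 0 < c) (f : Fin 9 → ℝ)
    (Δt : ℝ) (F : Fin 2 → ℝ)
    (hmom : ∀ α : Fin 2, ∑ i, ev c α i * f i = -(Δt / 2) * F α) :
    ∀ i : Fin 9,
      w9 i * (∑ α : Fin 2, ∑ β : Fin 2, ∑ γ : Fin 2,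
          H3 c α β γ i * (∑ j, H3 c α β γ j * f j)) / (6 * (cs2 c) ^ 3)
        = (f i - f (bar9 i)) / 2 +
            Δt / 2 * (w9 i * (∑ α : Fin 2, ev c α i * F α) / cs2 c) := by
  intro i
  have hforce : Δt / 2 * (w9 i * (∑ α : Fin 2, ev c α i * F α) / cs2 c) =
      -(w9 i * (∑ α : Fin 2, ev c α i * (∑ j, ev c α j * f j)) / cs2 c) := by
    simp only [hmom, Fin.sum_univ_two]
    ring
  rw [hforce, antisymm_part_eq_first_add_third_projection hc.ne' f i]
  ring

/-- **Third-order equivalence with forcing on D2Q9.** Under the modified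
momentum constraint `Σᵢ e_{iα} fᵢ = -(Δt/2) F_α`, the third-order Hermite projection
equals `f⁻ᵢ + (Δt/2) wᵢ (Σ_α e_{iα} F_α) / c_s²`. -/
theorem d2q9_third_order_equivalence_forcing (c : ℝ) (hc : 0 < c) (f : Fin 9 → ℝ)
    (Δt : ℝ) (hΔt : 0 < Δt) (F : Fin 2 → ℝ)
    (hmom : ∀ α : Fin 2, ∑ i, ev c α i * f i = -(Δt / 2) * F α) :
    ∀ i : Fin 9,
      w9 i * (∑ α : Fin 2, ∑ β : Fin 2, ∑ γ : Fin 2,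
          H3 c α β γ i * (∑ j, H3 c α β γ j * f j)) / (6 * (cs2 c) ^ 3)
        = (f i - f (bar9 i)) / 2 +
            Δt / 2 * (w9 i * (∑ α : Fin 2, ev c α i * F α) / cs2 c) :=
  d2q9_third_order_equivalence_forcing_general c hc f Δt F hmom
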